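/- arXiv:1606.08212 — 7 statements merged into one kernel-verified Lean document; each statement's English description precedes it below -/
import Mathlib

section
/- If B_1 and B_2 are d×d Bernoulli-compatible matrices, then their Hadamard (entrywise) product B_1 ∘ B_2 is Bernoulli-compatible; that is, the set of d×d Bernoulli-compatible matrices is closed under the Hadamard product (Proposition 2.2(iv)). -/
open MeasureTheory ProbabilityTheory Filter Set

noncomputable section

/-- A Bernoulli-compatible matrix: `B i j = E[X i * X j]` for some random vector `X`
taking values in `{0,1}^d` on some probability space. -/
def IsBernoulliCompatible {d : ℕ} (B : Matrix (Fin d) (Fin d) ℝ) : Prop :=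
  ∃ (Ω : Type) (_ : MeasurableSpace Ω) (μ : Measure Ω),
    IsProbabilityMeasure μ ∧
    ∃ X : Ω → Fin d → ℝ, Measurable X ∧
      (∀ ω i, X ω i = 0 ∨ X ω i = 1) ∧
      (∀ i j, B i j = ∫ ω, X ω i * X ω j ∂μ)

/-- The (lower) tail-dependence coefficient of `Yi` and `Yj` exists and equals `l`:
`P(Yi ≤ u, Yj ≤ u)/u → l` as `u ↓ 0`. -/
def HasTailDepCoeff {Ω : Type} [MeasurableSpace Ω] (μ : Measure Ω)
    (Yi Yj : Ω → ℝ) (l : ℝ) : Prop :=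
  Filter.Tendsto (fun u : ℝ => (μ {ω | Yi ω ≤ u ∧ Yj ω ≤ u}).toReal / u)
    (nhdsWithin 0 (Set.Ioi 0)) (nhds l)

/-- The uniform distribution on `[0,1]`. -/
def stdUniform : Measure ℝ := volume.restrict (Set.Icc (0:ℝ) 1)

/-- A tail-dependence matrix: the matrix of pairwise (lower) tail-dependence coefficients
of some random vector with standard uniform margins. -/
def IsTailDependenceMatrix {d : ℕ} (Λ : Matrix (Fin d) (Fin d) ℝ) : Prop :=
  ∃ (Ω : Type) (_ : MeasurableSpace Ω) (μ : Measure Ω),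
    IsProbabilityMeasure μ ∧
    ∃ Y : Ω → Fin d → ℝ, Measurable Y ∧
      (∀ i, μ.map (fun ω => Y ω i) = stdUniform) ∧
      (∀ i j, HasTailDepCoeff μ (fun ω => Y ω i) (fun ω => Y ω j) (Λ i j))

/-! Realize `B₁` and `B₂` by Bernoulli vectors `X` and `Y` on independent factors of a product
space. Then `Z i = X i * Y i` is again a Bernoulli vector, and by independence (Fubini)
`E[Z i * Z j] = E[X i * X j] * E[Y i * Y j]`. -/

lemma mul_eq_zero_or_eq_one {M : Type*} [MulZeroOneClass M] {a b : M}
    (ha : a = 0 ∨ a = 1) (hb : b = 0 ∨ b = 1) : a * b = 0 ∨ a * b = 1 := by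
  rcases ha with rfl | rfl <;> simp [hb]

lemma integral_prod_mul_mul {α β L : Type*} [RCLike L] [MeasurableSpace α] [MeasurableSpace β]
    (μ : Measure α) (ν : Measure β) [SFinite μ] [SFinite ν] (f₁ f₂ : α → L) (g₁ g₂ : β → L) :
    ∫ z, (f₁ z.1 * g₁ z.2) * (f₂ z.1 * g₂ z.2) ∂μ.prod ν
      = (∫ x, f₁ x * f₂ x ∂μ) * ∫ y, g₁ y * g₂ y ∂ν := by
  simp_rw [mul_mul_mul_comm (f₁ _)]
  exact integral_prod_mul (fun x ↦ f₁ x * f₂ x) (fun y ↦ g₁ y * g₂ y)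

/-- Proposition 2.2(iv): the set of `d×d` Bernoulli-compatible matrices is closed under
the Hadamard (entrywise) product. -/
theorem bernoulli_compatible_hadamard {d : ℕ} (B₁ B₂ : Matrix (Fin d) (Fin d) ℝ)
    (h₁ : IsBernoulliCompatible B₁) (h₂ : IsBernoulliCompatible B₂) :
    IsBernoulliCompatible (Matrix.of fun i j => B₁ i j * B₂ i j) := by
  obtain ⟨Ω₁, _, μ₁, _, X, hX, hX01, hB₁⟩ := h₁
  obtain ⟨Ω₂, _, μ₂, _, Y, hY, hY01, hB₂⟩ := h₂
  refine ⟨Ω₁ × Ω₂, inferInstance, μ₁.prod μ₂, inferInstance, fun ω i => X ω.1 i * Y ω.2 i,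
    by fun_prop, fun ω i => mul_eq_zero_or_eq_one (hX01 ω.1 i) (hY01 ω.2 i), fun i j => ?_⟩
  rw [Matrix.of_apply, hB₁, hB₂]
  exact (integral_prod_mul_mul μ₁ μ₂ (X · i) (X · j) (Y · i) (Y · j)).symm
end
end

section
/- A d×d real matrix B is Bernoulli-compatible if and only if B is a convex combination of matrices of the form p·pᵀ with p ∈ {0,1}^d; that is, the set of d×d Bernoulli-compatible matrices equals the convex hull of { p·pᵀ : p ∈ {0,1}^d } (Theorem 2.4). In particular, this set is closed under convergence in the Euclidean norm. -/
open MeasureTheory ProbabilityTheory Filter Set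

noncomputable section

/-!
If `X` is a random vector in `{0,1}^d`, then `X Xᵀ` takes values in the finite set
`{p pᵀ : p ∈ {0,1}^d}`, so its expectation lies in the convex hull of that set, which is closed
since it is compact. Conversely, a convex combination `∑ w_k p_k p_kᵀ` is `E[X Xᵀ]` for the random
vector `X` that equals `p_k` with probability `w_k`.
-/

open Matrix

def binaryOuterProducts (ι : Type*) : Set (Matrix ι ι ℝ) :=
  {B | ∃ p : ι → ℝ, (∀ i, p i = 0 ∨ p i = 1) ∧ B = vecMulVec p p}

theorem finite_binaryOuterProducts (ι : Type*) [Finite ι] :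
    (binaryOuterProducts ι).Finite := by
  have hbin : (univ.pi fun _ : ι => ({0, 1} : Set ℝ)).Finite :=
    Set.Finite.pi fun _ => toFinite _
  refine (hbin.image fun p => vecMulVec p p).subset ?_
  rintro B ⟨p, hp, rfl⟩
  exact ⟨p, fun i _ => hp i, rfl⟩

theorem IsBernoulliCompatible.mem_convexHull {d : ℕ} {B : Matrix (Fin d) (Fin d) ℝ}
    (hB : IsBernoulliCompatible B) : B ∈ convexHull ℝ (binaryOuterProducts (Fin d)) := by
  obtain ⟨Ω, _, μ, _, X, hXm, hX, hBX⟩ := hB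
  -- `Matrix` carries no norm, so the expectation of `X Xᵀ` is taken in `Fin d → Fin d → ℝ`.
  set f : Ω → Fin d → Fin d → ℝ := fun ω i j => X ω i * X ω j
  have hfS : ∀ ω, f ω ∈ binaryOuterProducts (Fin d) := fun ω => ⟨X ω, hX ω, rfl⟩
  have hentry : ∀ i j, Integrable (fun ω => f ω i j) μ := by
    intro i j
    have hm : Measurable fun ω => f ω i j :=
      ((measurable_pi_apply i).comp hXm).mul ((measurable_pi_apply j).comp hXm)
    refine .of_bound hm.aestronglyMeasurable 1 (ae_of_all _ fun ω => ?_)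
    rcases hX ω i with hi | hi <;> rcases hX ω j with hj | hj <;> simp [f, hi, hj]
  have hf : Integrable f μ := .of_eval fun i => .of_eval fun j => hentry i j
  have hBf : B = ∫ ω, f ω ∂μ := by
    ext i j
    rw [hBX, eval_integral (fun i => hf.eval i), eval_integral (hentry i)]
  have hS := finite_binaryOuterProducts (Fin d)
  have hmem : ∫ ω, f ω ∂μ ∈
      (convexHull ℝ (binaryOuterProducts (Fin d)) : Set (Fin d → Fin d → ℝ)) :=
    Convex.integral_mem (E := Fin d → Fin d → ℝ) (convex_convexHull ℝ _)
      (hS.isClosed_convexHull (𝕜 := ℝ)) (ae_of_all _ fun ω => subset_convexHull ℝ _ (hfS ω)) hf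
  exact hBf ▸ hmem

theorem isBernoulliCompatible_sum_smul_vecMulVec {d : ℕ} {α : Type} [Fintype α] {w : α → ℝ}
    (hw : w ∈ stdSimplex ℝ α) {p : α → Fin d → ℝ} (hp : ∀ a i, p a i = 0 ∨ p a i = 1) :
    IsBernoulliCompatible (∑ a, w a • vecMulVec (p a) (p a)) := by
  have hsum : ∑ a, ENNReal.ofReal (w a) = 1 := by
    rw [← ENNReal.ofReal_sum_of_nonneg fun a _ => hw.1 a, hw.2, ENNReal.ofReal_one]
  let : MeasurableSpace α := ⊤
  let ν := PMF.ofFintype (fun a => ENNReal.ofReal (w a)) hsum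
  refine ⟨α, ⊤, ν.toMeasure, inferInstance, p, measurable_from_top, hp, fun i j => ?_⟩
  rw [PMF.integral_eq_sum, Matrix.sum_apply]
  refine Finset.sum_congr rfl fun a _ => ?_
  simp [ν, ENNReal.toReal_ofReal (hw.1 a), vecMulVec_apply]

theorem isBernoulliCompatible_of_mem_convexHull {d : ℕ} {B : Matrix (Fin d) (Fin d) ℝ}
    (hB : B ∈ convexHull ℝ (binaryOuterProducts (Fin d))) : IsBernoulliCompatible B := by
  have hS := finite_binaryOuterProducts (Fin d)
  let := hS.fintype
  rw [hS.convexHull_eq_image] at hB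
  obtain ⟨w, hw, rfl⟩ := hB
  choose p hp hpB using fun x : binaryOuterProducts (Fin d) => x.2
  convert isBernoulliCompatible_sum_smul_vecMulVec hw hp
  simp [← hpB]

/-- Theorem 2.4: the set of `d×d` Bernoulli-compatible matrices equals the convex hull of
`{p pᵀ : p ∈ {0,1}^d}`; in particular it is closed (under convergence in Euclidean norm). -/
theorem bernoulli_compatible_eq_convexHull (d : ℕ) :
    {B : Matrix (Fin d) (Fin d) ℝ | IsBernoulliCompatible B} =
      convexHull ℝ {B : Matrix (Fin d) (Fin d) ℝ |
        ∃ p : Fin d → ℝ, (∀ i, p i = 0 ∨ p i = 1) ∧ B = Matrix.vecMulVec p p} ∧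
    IsClosed {B : Matrix (Fin d) (Fin d) ℝ | IsBernoulliCompatible B} := by
  have h : {B : Matrix (Fin d) (Fin d) ℝ | IsBernoulliCompatible B} =
      convexHull ℝ (binaryOuterProducts (Fin d)) :=
    Subset.antisymm (fun _ hB => hB.mem_convexHull) fun _ => isBernoulliCompatible_of_mem_convexHull
  exact ⟨h, h ▸ (finite_binaryOuterProducts (Fin d)).isClosed_convexHull (𝕜 := ℝ)⟩
end
end

section
/- Every d×d Bernoulli-compatible matrix is completely positive; that is, if B_{ij} = E[X_i X_j] for some random vector X taking values in {0,1}^d, then there exist m ∈ ℕ and a d×m matrix A with all entries nonnegative such that B = A·Aᵀ (Corollary 2.5). -/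
open MeasureTheory ProbabilityTheory Filter Set

noncomputable section

/-! A Bernoulli vector takes only the finitely many values `s ∈ {0,1}^d`, so
`E[X Xᵀ] = ∑ₛ P(X = s) • s sᵀ` is a nonnegative combination of rank-one matrices `s sᵀ` with
`s ≥ 0`; the matrix with columns `√P(X = s) • s` is then a nonnegative factor. -/

namespace Matrix

variable {n : Type*}

def IsCompletelyPositive (B : Matrix n n ℝ) : Prop :=
  ∃ (m : ℕ) (A : Matrix n (Fin m) ℝ), (∀ i j, 0 ≤ A i j) ∧ B = A * Aᵀ

theorem isCompletelyPositive_mul_transpose {κ : Type*} [Fintype κ] {A : Matrix n κ ℝ}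
    (hA : ∀ i k, 0 ≤ A i k) : (A * Aᵀ).IsCompletelyPositive := by
  let e := Fintype.equivFin κ
  refine ⟨Fintype.card κ, A.submatrix id e.symm, fun i k => hA _ _, ?_⟩
  rw [transpose_submatrix, submatrix_mul_equiv, submatrix_id_id]

theorem isCompletelyPositive_sum_smul_vecMulVec {κ : Type*} [Fintype κ] {c : κ → ℝ}
    {v : κ → n → ℝ} (hc : ∀ k, 0 ≤ c k) (hv : ∀ k i, 0 ≤ v k i) :
    (∑ k, c k • vecMulVec (v k) (v k)).IsCompletelyPositive := by
  let A : Matrix n κ ℝ := of fun i k => √(c k) * v k i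
  have hA : ∑ k, c k • vecMulVec (v k) (v k) = A * Aᵀ := by
    ext i j
    simp only [sum_apply, smul_apply, vecMulVec_apply, smul_eq_mul, mul_apply, transpose_apply,
      A, of_apply]
    refine Finset.sum_congr rfl fun k _ => ?_
    rw [mul_mul_mul_comm, Real.mul_self_sqrt (hc k)]
  exact hA ▸ isCompletelyPositive_mul_transpose fun i k => mul_nonneg (Real.sqrt_nonneg _) (hv k i)

end Matrix

theorem MeasureTheory.integral_comp_eq_sum_measureReal_preimage {Ω α E : Type*}
    [MeasurableSpace Ω] [MeasurableSpace α] [MeasurableSingletonClass α] [Fintype α]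
    [NormedAddCommGroup E] [NormedSpace ℝ E] [CompleteSpace E]
    {μ : Measure Ω} [IsFiniteMeasure μ] {Y : Ω → α} (hY : Measurable Y) (g : α → E) :
    ∫ ω, g (Y ω) ∂μ = ∑ a, μ.real (Y ⁻¹' {a}) • g a := by
  rw [← integral_map hY.aemeasurable AEStronglyMeasurable.of_discrete,
    integral_fintype .of_finite]
  simp only [map_measureReal_apply hY (measurableSet_singleton _)]

theorem isCompletelyPositive_secondMoment_of_finite {Ω α ι : Type*} [MeasurableSpace Ω]
    [MeasurableSpace α] [MeasurableSingletonClass α] [Fintype α]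
    {μ : Measure Ω} [IsFiniteMeasure μ] {Y : Ω → α} (hY : Measurable Y) {v : α → ι → ℝ}
    (hv : ∀ a i, 0 ≤ v a i) :
    (Matrix.of fun i j => ∫ ω, v (Y ω) i * v (Y ω) j ∂μ).IsCompletelyPositive := by
  have hB : (Matrix.of fun i j => ∫ ω, v (Y ω) i * v (Y ω) j ∂μ)
      = ∑ a, μ.real (Y ⁻¹' {a}) • Matrix.vecMulVec (v a) (v a) := by
    ext i j
    simp only [Matrix.of_apply, integral_comp_eq_sum_measureReal_preimage hY
      (fun a => v a i * v a j), Matrix.sum_apply, Matrix.smul_apply, Matrix.vecMulVec_apply]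
  exact hB ▸ Matrix.isCompletelyPositive_sum_smul_vecMulVec (fun _ => measureReal_nonneg) hv

/-- Corollary 2.5: every Bernoulli-compatible matrix is completely positive. -/
theorem bernoulli_compatible_completelyPositive {d : ℕ} (B : Matrix (Fin d) (Fin d) ℝ)
    (hB : IsBernoulliCompatible B) :
    ∃ (m : ℕ) (A : Matrix (Fin d) (Fin m) ℝ), (∀ i j, 0 ≤ A i j) ∧ B = A * A.transpose := by
  obtain ⟨Ω, _, μ, _, X, hX, hX01, hBX⟩ := hB
  let Y : Ω → Fin d → Bool := fun ω i => X ω i = 1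
  let v : (Fin d → Bool) → Fin d → ℝ := fun s i => if s i then 1 else 0
  have hY : Measurable Y := measurable_pi_lambda _ fun i =>
    measurable_to_bool <| by
      convert (measurable_pi_apply i).comp hX (measurableSet_singleton 1) using 1
      ext ω
      simp [Y]
  have hXY : ∀ ω, X ω = v (Y ω) := fun ω => funext fun i => by
    rcases hX01 ω i with h | h <;> simp [Y, v, h]
  have hB : B = Matrix.of fun i j => ∫ ω, v (Y ω) i * v (Y ω) j ∂μ := by
    ext i j
    simp only [hBX, hXY, Matrix.of_apply]
  exact hB ▸ isCompletelyPositive_secondMoment_of_finite hY fun s i => by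
    by_cases h : s i <;> simp [v, h]
end
end

section
/- The set B_d^* = { a·B : a ≥ 0, B a d×d Bernoulli-compatible matrix } is a convex cone (closed under nonnegative scalar multiples and under addition) and is closed under the Hadamard (entrywise) product; thus (B_d^*, +, ∘) is a commutative semiring (Proposition 2.7). -/
open MeasureTheory ProbabilityTheory Filter Set

noncomputable section

/-- `B_d^*`, the convex cone generated by the Bernoulli-compatible matrices. -/
def InBdStar {d : ℕ} (M : Matrix (Fin d) (Fin d) ℝ) : Prop :=
  ∃ (a : ℝ) (B : Matrix (Fin d) (Fin d) ℝ), 0 ≤ a ∧ IsBernoulliCompatible B ∧ M = a • B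

open scoped Matrix

lemma zero_or_one_mul {x y : ℝ} (hx : x = 0 ∨ x = 1) (hy : y = 0 ∨ y = 1) :
    x * y = 0 ∨ x * y = 1 := by
  rcases hx with rfl | rfl <;> simp [hy]

lemma norm_le_one_of_zero_or_one {x : ℝ} (hx : x = 0 ∨ x = 1) : ‖x‖ ≤ 1 := by
  rcases hx with rfl | rfl <;> simp

namespace IsBernoulliCompatible

variable {d : ℕ} {B₁ B₂ : Matrix (Fin d) (Fin d) ℝ}

/-- Mixing the two laws with weights `s` and `t` on the disjoint union of the sample spaces. -/
lemma convex_comb (h₁ : IsBernoulliCompatible B₁) (h₂ : IsBernoulliCompatible B₂)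
    {s t : ℝ} (hs : 0 ≤ s) (ht : 0 ≤ t) (hst : s + t = 1) :
    IsBernoulliCompatible (s • B₁ + t • B₂) := by
  obtain ⟨Ω₁, _, μ₁, _, X₁, hX₁, hX₁01, hB₁⟩ := h₁
  obtain ⟨Ω₂, _, μ₂, _, X₂, hX₂, hX₂01, hB₂⟩ := h₂
  let ν₁ : Measure (Ω₁ ⊕ Ω₂) := ENNReal.ofReal s • μ₁.map Sum.inl
  let ν₂ : Measure (Ω₁ ⊕ Ω₂) := ENNReal.ofReal t • μ₂.map Sum.inr
  have hν : IsProbabilityMeasure (ν₁ + ν₂) := by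
    constructor
    simp [ν₁, ν₂, Measure.map_apply measurable_inl MeasurableSet.univ,
      Measure.map_apply measurable_inr MeasurableSet.univ, ← ENNReal.ofReal_add hs ht, hst]
  let X : Ω₁ ⊕ Ω₂ → Fin d → ℝ := Sum.elim X₁ X₂
  have hX : Measurable X := hX₁.sumElim hX₂
  have hX01 : ∀ ω i, X ω i = 0 ∨ X ω i = 1 := by
    rintro (ω | ω) i
    exacts [hX₁01 ω i, hX₂01 ω i]
  refine ⟨Ω₁ ⊕ Ω₂, inferInstance, ν₁ + ν₂, hν, X, hX, hX01, fun i j => ?_⟩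
  have hf : Measurable fun ω => X ω i * X ω j :=
    ((measurable_pi_apply i).comp hX).mul ((measurable_pi_apply j).comp hX)
  have hbound : ∀ᵐ ω ∂(ν₁ + ν₂), ‖X ω i * X ω j‖ ≤ 1 :=
    ae_of_all _ fun ω => norm_le_one_of_zero_or_one (zero_or_one_mul (hX01 ω i) (hX01 ω j))
  obtain ⟨hint₁, hint₂⟩ :=
    integrable_add_measure.mp (Integrable.of_bound hf.aestronglyMeasurable 1 hbound)
  rw [integral_add_measure hint₁ hint₂,
    integral_smul_measure, integral_smul_measure,
    integral_map measurable_inl.aemeasurable hf.aestronglyMeasurable,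
    integral_map measurable_inr.aemeasurable hf.aestronglyMeasurable,
    ENNReal.toReal_ofReal hs, ENNReal.toReal_ofReal ht]
  simp [X, hB₁, hB₂]

/-- The Hadamard product is realised by the coordinatewise product of independent copies. -/
lemma hadamard (h₁ : IsBernoulliCompatible B₁) (h₂ : IsBernoulliCompatible B₂) :
    IsBernoulliCompatible (B₁ ⊙ B₂) := by
  obtain ⟨Ω₁, _, μ₁, _, X₁, hX₁, hX₁01, hB₁⟩ := h₁
  obtain ⟨Ω₂, _, μ₂, _, X₂, hX₂, hX₂01, hB₂⟩ := h₂
  let X : Ω₁ × Ω₂ → Fin d → ℝ := fun ω i => X₁ ω.1 i * X₂ ω.2 i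
  have hX : Measurable X := measurable_pi_lambda _ fun i =>
    ((measurable_pi_apply i).comp (hX₁.comp measurable_fst)).mul
      ((measurable_pi_apply i).comp (hX₂.comp measurable_snd))
  refine ⟨Ω₁ × Ω₂, inferInstance, μ₁.prod μ₂, inferInstance, X, hX,
    fun ω i => zero_or_one_mul (hX₁01 ω.1 i) (hX₂01 ω.2 i), fun i j => ?_⟩
  calc (B₁ ⊙ B₂) i j
      = ∫ ω : Ω₁ × Ω₂, (X₁ ω.1 i * X₁ ω.1 j) * (X₂ ω.2 i * X₂ ω.2 j) ∂(μ₁.prod μ₂) := by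
        rw [integral_prod_mul (fun ω₁ => X₁ ω₁ i * X₁ ω₁ j) (fun ω₂ => X₂ ω₂ i * X₂ ω₂ j),
          ← hB₁, ← hB₂, Matrix.hadamard_apply]
    _ = ∫ ω, X ω i * X ω j ∂(μ₁.prod μ₂) := by
        congr 1 with ω
        ring

end IsBernoulliCompatible

namespace InBdStar

variable {d : ℕ} {M₁ M₂ : Matrix (Fin d) (Fin d) ℝ}

lemma smul {a : ℝ} (ha : 0 ≤ a) (h : InBdStar M₁) : InBdStar (a • M₁) := by
  obtain ⟨b, B, hb, hB, rfl⟩ := h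
  exact ⟨a * b, B, mul_nonneg ha hb, hB, smul_smul a b B⟩

/-- `a • B₁ + b • B₂ = (a + b) • (s • B₁ + t • B₂)` with `s = a / (a + b)`, `t = b / (a + b)`. -/
lemma add (h₁ : InBdStar M₁) (h₂ : InBdStar M₂) : InBdStar (M₁ + M₂) := by
  obtain ⟨a, B₁, ha, hB₁, rfl⟩ := h₁
  obtain ⟨b, B₂, hb, hB₂, rfl⟩ := h₂
  rcases (add_nonneg ha hb).eq_or_lt with hab | hab
  · obtain ⟨rfl, rfl⟩ : a = 0 ∧ b = 0 := ⟨by linarith, by linarith⟩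
    exact ⟨0, B₁, le_rfl, hB₁, by simp⟩
  refine ⟨a + b, (a / (a + b)) • B₁ + (b / (a + b)) • B₂, hab.le,
    hB₁.convex_comb hB₂ (by positivity) (by positivity) (by field_simp), ?_⟩
  rw [smul_add, smul_smul, smul_smul, mul_div_cancel₀ _ hab.ne', mul_div_cancel₀ _ hab.ne']

lemma hadamard (h₁ : InBdStar M₁) (h₂ : InBdStar M₂) : InBdStar (M₁ ⊙ M₂) := by
  obtain ⟨a, B₁, ha, hB₁, rfl⟩ := h₁
  obtain ⟨b, B₂, hb, hB₂, rfl⟩ := h₂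
  exact ⟨a * b, B₁ ⊙ B₂, mul_nonneg ha hb, hB₁.hadamard hB₂, by
    rw [Matrix.smul_hadamard, Matrix.hadamard_smul, smul_smul, mul_comm]⟩

end InBdStar

/-- Proposition 2.7: `B_d^*` is a convex cone (closed under nonnegative scalar multiplication
and addition) and is closed under the Hadamard product, so `(B_d^*, +, ∘)` is a commutative
semiring. -/
theorem BdStar_cone_semiring (d : ℕ) :
    (∀ (a : ℝ) (M : Matrix (Fin d) (Fin d) ℝ), 0 ≤ a → InBdStar M → InBdStar (a • M)) ∧
    (∀ M₁ M₂ : Matrix (Fin d) (Fin d) ℝ, InBdStar M₁ → InBdStar M₂ → InBdStar (M₁ + M₂)) ∧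
    (∀ M₁ M₂ : Matrix (Fin d) (Fin d) ℝ, InBdStar M₁ → InBdStar M₂ →
      InBdStar (Matrix.of fun i j => M₁ i j * M₂ i j)) :=
  ⟨fun _ _ ha h => h.smul ha, fun _ _ => InBdStar.add, fun _ _ => InBdStar.hadamard⟩
end
end

section
/- If Λ_1 and Λ_2 are d×d tail-dependence matrices and t ∈ [0,1], then t·Λ_1 + (1−t)·Λ_2 is a tail-dependence matrix; that is, the set T_d of d×d tail-dependence matrices is convex. Moreover, the identity matrix I_d and the all-ones matrix (1)_{d×d} are tail-dependence matrices (Proposition 3.3(ii),(iii)). -/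
open MeasureTheory ProbabilityTheory Filter Set

noncomputable section

/-!
Convexity comes from mixing: on the disjoint union of the two sample spaces, draw from the first
model with probability `t` and from the second otherwise. Margins stay uniform and every joint
tail probability `P(Yᵢ ≤ u, Yⱼ ≤ u)` is the same convex combination, hence so is its limit after
dividing by `u`. The identity is realized by independent uniforms, whose joint tail probability
is `u²`, and the all-ones matrix by the comonotone vector `(U, …, U)`.
-/

open scoped NNReal

instance : IsProbabilityMeasure stdUniform :=
  ⟨by simp [stdUniform, Real.volume_Icc]⟩

lemma stdUniform_Iic {u : ℝ} (hu : u ≤ 1) :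
    stdUniform (Iic u) = ENNReal.ofReal u := by
  have hIcc : Iic u ∩ Icc 0 1 = Icc 0 u := by
    ext x
    simp only [mem_inter_iff, mem_Iic, mem_Icc]
    grind
  rw [stdUniform, Measure.restrict_apply measurableSet_Iic, hIcc, Real.volume_Icc, sub_zero]

section TailCoefficients

variable {Ω : Type} [MeasurableSpace Ω] {μ : Measure Ω}

lemma aemeasurable_of_map_eq_stdUniform {X : Ω → ℝ} (hX : μ.map X = stdUniform) :
    AEMeasurable X μ := by
  by_contra h
  rw [Measure.map_of_not_aemeasurable h] at hX
  exact IsProbabilityMeasure.ne_zero stdUniform hX.symm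

lemma measure_le_of_map_eq_stdUniform {X : Ω → ℝ} (hX : μ.map X = stdUniform) {u : ℝ}
    (hu : u ≤ 1) : μ {ω | X ω ≤ u} = ENNReal.ofReal u := by
  rw [← stdUniform_Iic hu, ← hX, Measure.map_apply₀ (aemeasurable_of_map_eq_stdUniform hX)
    measurableSet_Iic.nullMeasurableSet]
  rfl

lemma hasTailDepCoeff_self {X : Ω → ℝ} (hX : μ.map X = stdUniform) :
    HasTailDepCoeff μ X X 1 := by
  refine tendsto_const_nhds.congr' (eventuallyEq_of_mem (Ioo_mem_nhdsGT one_pos) fun u hu ↦ ?_)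
  simp only [and_self, measure_le_of_map_eq_stdUniform hX hu.2.le,
    ENNReal.toReal_ofReal hu.1.le, div_self hu.1.ne']

lemma IndepFun.hasTailDepCoeff_zero {X Y : Ω → ℝ} (hXY : IndepFun X Y μ)
    (hX : μ.map X = stdUniform) (hY : μ.map Y = stdUniform) :
    HasTailDepCoeff μ X Y 0 := by
  refine (tendsto_nhdsWithin_of_tendsto_nhds tendsto_id).congr'
    (eventuallyEq_of_mem (Ioo_mem_nhdsGT one_pos) fun u hu ↦ ?_)
  have hprod : μ {ω | X ω ≤ u ∧ Y ω ≤ u} = ENNReal.ofReal u * ENNReal.ofReal u :=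
    (hXY.measure_inter_preimage_eq_mul _ _ measurableSet_Iic measurableSet_Iic).trans
      (congr_arg₂ (· * ·) (measure_le_of_map_eq_stdUniform hX hu.2.le)
        (measure_le_of_map_eq_stdUniform hY hu.2.le))
  rw [id, hprod, ← ENNReal.ofReal_mul hu.1.le, ENNReal.toReal_ofReal (mul_nonneg hu.1.le hu.1.le),
    mul_div_cancel_right₀ _ hu.1.ne']

end TailCoefficients

section Mixture

variable {Ω₁ Ω₂ : Type} [MeasurableSpace Ω₁] [MeasurableSpace Ω₂]

lemma measurableEmbedding_inl : MeasurableEmbedding (Sum.inl : Ω₁ → Ω₁ ⊕ Ω₂) :=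
  ⟨Sum.inl_injective, measurable_inl, fun _ ↦ MeasurableSet.inl_image⟩

lemma measurableEmbedding_inr : MeasurableEmbedding (Sum.inr : Ω₂ → Ω₁ ⊕ Ω₂) :=
  ⟨Sum.inr_injective, measurable_inr, fun _ ↦ MeasurableSet.inr_image⟩

def sumMixture (a b : ℝ≥0) (μ₁ : Measure Ω₁) (μ₂ : Measure Ω₂) : Measure (Ω₁ ⊕ Ω₂) :=
  a • μ₁.map Sum.inl + b • μ₂.map Sum.inr

variable {a b : ℝ≥0} {μ₁ : Measure Ω₁} {μ₂ : Measure Ω₂}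

lemma sumMixture_apply (s : Set (Ω₁ ⊕ Ω₂)) :
    sumMixture a b μ₁ μ₂ s = a * μ₁ (Sum.inl ⁻¹' s) + b * μ₂ (Sum.inr ⁻¹' s) := by
  rw [sumMixture, Measure.add_apply, Measure.coe_nnreal_smul_apply,
    Measure.coe_nnreal_smul_apply, measurableEmbedding_inl.map_apply,
    measurableEmbedding_inr.map_apply]

lemma isProbabilityMeasure_sumMixture [IsProbabilityMeasure μ₁] [IsProbabilityMeasure μ₂]
    (hab : a + b = 1) : IsProbabilityMeasure (sumMixture a b μ₁ μ₂) :=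
  ⟨by simp only [sumMixture_apply, preimage_univ, measure_univ, mul_one, ← ENNReal.coe_add,
    hab, ENNReal.coe_one]⟩

lemma map_sumElim_sumMixture {β : Type} [MeasurableSpace β] {f : Ω₁ → β} {g : Ω₂ → β}
    (hf : Measurable f) (hg : Measurable g) :
    (sumMixture a b μ₁ μ₂).map (Sum.elim f g) = a • μ₁.map f + b • μ₂.map g := by
  rw [sumMixture, Measure.map_add _ _ (hf.sumElim hg), Measure.map_smul, Measure.map_smul,
    Measure.map_map (hf.sumElim hg) measurable_inl,
    Measure.map_map (hf.sumElim hg) measurable_inr, Sum.elim_comp_inl, Sum.elim_comp_inr]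

lemma HasTailDepCoeff.sumMixture [IsFiniteMeasure μ₁] [IsFiniteMeasure μ₂]
    {X₁ Y₁ : Ω₁ → ℝ} {X₂ Y₂ : Ω₂ → ℝ} {l₁ l₂ : ℝ}
    (h₁ : HasTailDepCoeff μ₁ X₁ Y₁ l₁) (h₂ : HasTailDepCoeff μ₂ X₂ Y₂ l₂) :
    HasTailDepCoeff (sumMixture a b μ₁ μ₂) (Sum.elim X₁ X₂) (Sum.elim Y₁ Y₂) (a * l₁ + b * l₂) := by
  unfold HasTailDepCoeff at h₁ h₂ ⊢
  refine ((h₁.const_mul (a : ℝ)).add (h₂.const_mul (b : ℝ))).congr fun u ↦ ?_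
  rw [sumMixture_apply, ENNReal.toReal_add (by finiteness) (by finiteness),
    ENNReal.toReal_mul, ENNReal.toReal_mul, add_div, mul_div_assoc, mul_div_assoc]
  rfl

end Mixture

lemma convex_isTailDependenceMatrix (d : ℕ) :
    Convex ℝ {Λ : Matrix (Fin d) (Fin d) ℝ | IsTailDependenceMatrix Λ} := by
  rintro Λ₁ ⟨Ω₁, _, μ₁, _, Y₁, hY₁, hunif₁, htail₁⟩ Λ₂ ⟨Ω₂, _, μ₂, _, Y₂, hY₂, hunif₂, htail₂⟩
    a b ha hb hab
  lift a to ℝ≥0 using ha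
  lift b to ℝ≥0 using hb
  have hab : a + b = 1 := by exact_mod_cast hab
  have hY₁i : ∀ i, Measurable (Y₁ · i) := measurable_pi_iff.1 hY₁
  have hY₂i : ∀ i, Measurable (Y₂ · i) := measurable_pi_iff.1 hY₂
  refine ⟨Ω₁ ⊕ Ω₂, inferInstance, sumMixture a b μ₁ μ₂, isProbabilityMeasure_sumMixture hab,
    fun ω i ↦ Sum.elim (Y₁ · i) (Y₂ · i) ω,
    measurable_pi_lambda _ fun i ↦ (hY₁i i).sumElim (hY₂i i),
    fun i ↦ ?_, fun i j ↦ (htail₁ i j).sumMixture (htail₂ i j)⟩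
  rw [map_sumElim_sumMixture (hY₁i i) (hY₂i i), hunif₁, hunif₂, ← add_smul, hab, one_smul]

lemma isTailDependenceMatrix_one (d : ℕ) :
    IsTailDependenceMatrix (1 : Matrix (Fin d) (Fin d) ℝ) := by
  have hunif (i : Fin d) : (Measure.pi fun _ ↦ stdUniform).map (fun ω : Fin d → ℝ ↦ ω i)
      = stdUniform :=
    (measurePreserving_eval _ i).map_eq
  refine ⟨Fin d → ℝ, inferInstance, Measure.pi fun _ ↦ stdUniform, inferInstance, fun ω ↦ ω,
    measurable_id, hunif, fun i j ↦ ?_⟩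
  rcases eq_or_ne i j with rfl | hij
  · rw [Matrix.one_apply_eq]
    exact hasTailDepCoeff_self (hunif i)
  · rw [Matrix.one_apply_ne hij]
    exact IndepFun.hasTailDepCoeff_zero
      ((iIndepFun_pi (X := fun _ ↦ id) fun _ ↦ aemeasurable_id).indepFun hij) (hunif i) (hunif j)

lemma isTailDependenceMatrix_ones (d : ℕ) :
    IsTailDependenceMatrix (Matrix.of fun (_ _ : Fin d) ↦ (1 : ℝ)) :=
  ⟨ℝ, inferInstance, stdUniform, inferInstance, fun ω _ ↦ ω, measurable_pi_lambda _
    fun _ ↦ measurable_id, fun _ ↦ Measure.map_id, fun _ _ ↦ hasTailDepCoeff_self Measure.map_id⟩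

/-- Proposition 3.3(ii),(iii): the set of tail-dependence matrices is convex, and both the
identity matrix and the all-ones matrix are tail-dependence matrices. -/
theorem tail_dependence_convex_id_ones (d : ℕ) :
    (∀ (Λ₁ Λ₂ : Matrix (Fin d) (Fin d) ℝ), IsTailDependenceMatrix Λ₁ →
      IsTailDependenceMatrix Λ₂ → ∀ t ∈ Set.Icc (0:ℝ) 1,
        IsTailDependenceMatrix (t • Λ₁ + (1 - t) • Λ₂)) ∧
    IsTailDependenceMatrix (1 : Matrix (Fin d) (Fin d) ℝ) ∧
    IsTailDependenceMatrix (Matrix.of fun (_ _ : Fin d) => (1:ℝ)) :=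
  ⟨fun _ _ h₁ h₂ t ht ↦ convex_isTailDependenceMatrix d h₁ h₂ ht.1 (sub_nonneg.2 ht.2)
    (add_sub_cancel t 1), isTailDependenceMatrix_one d, isTailDependenceMatrix_ones d⟩
end
end

section
/- Every d×d tail-dependence matrix is completely positive (i.e., of the form A·Aᵀ for some matrix A with nonnegative entries), and hence positive semi-definite (Corollary 3.8). -/
open MeasureTheory ProbabilityTheory Filter Set

noncomputable section

/-!
For `u > 0` the matrix `P(Yᵢ ≤ u, Yⱼ ≤ u) / u` equals `∑ₛ c_u(s) 𝟙ₛ 𝟙ₛᵀ`, the sum over the nonempty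
sets `s` of coordinates, with `c_u(s) = P({k | Y_k ≤ u} = s) / u`. Since `{k | Y_k ≤ u} ∋ i` forces
`Yᵢ ≤ u`, uniform margins give `c_u(s) ∈ [0, 1]`. The matrices `∑ₛ c(s) 𝟙ₛ 𝟙ₛᵀ` with `c ∈ [0, 1]^S`
form a compact set of completely positive matrices, so it contains the limit `Λ` as `u ↓ 0`.
-/

def Matrix.IsCompletelyPositive_s11 {ι : Type*} (B : Matrix ι ι ℝ) : Prop :=
  ∃ (m : ℕ) (A : Matrix ι (Fin m) ℝ), (∀ i j, 0 ≤ A i j) ∧ B = A * A.transpose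

namespace Matrix

variable {ι : Type*}

theorem IsCompletelyPositive_s11.of_mul_transpose {κ : Type*} [Fintype κ] (A : Matrix ι κ ℝ)
    (hA : ∀ i k, 0 ≤ A i k) : (A * Aᵀ).IsCompletelyPositive_s11 := by
  let e := (Fintype.equivFin κ).symm
  refine ⟨Fintype.card κ, A.submatrix id e, fun i k => hA i (e k), ?_⟩
  rw [transpose_submatrix, submatrix_mul_equiv, submatrix_id_id]

theorem IsCompletelyPositive_s11.posSemidef [Fintype ι] {B : Matrix ι ι ℝ}
    (hB : B.IsCompletelyPositive_s11) : B.PosSemidef := by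
  obtain ⟨m, A, -, rfl⟩ := hB
  simpa [conjTranspose_eq_transpose_of_trivial] using posSemidef_self_mul_conjTranspose A

end Matrix

section IndicatorGram

open Finset Matrix

variable {ι : Type*} [Fintype ι] [DecidableEq ι]

/-- `∑ₛ a s • 𝟙ₛ 𝟙ₛᵀ`. -/
def indicatorGram (a : Finset ι → ℝ) : Matrix ι ι ℝ :=
  Matrix.of fun i j => ∑ s ∈ univ.filter (fun s => i ∈ s ∧ j ∈ s), a s

theorem indicatorGram_apply (a : Finset ι → ℝ) (i j : ι) :
    indicatorGram a i j = ∑ s ∈ univ.filter (fun s => i ∈ s ∧ j ∈ s), a s := rfl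

theorem isCompletelyPositive_indicatorGram {a : Finset ι → ℝ} (ha : 0 ≤ a) :
    (indicatorGram a).IsCompletelyPositive_s11 := by
  let A : Matrix ι (Finset ι) ℝ := Matrix.of fun i s => if i ∈ s then √(a s) else 0
  convert IsCompletelyPositive_s11.of_mul_transpose A fun i s => by
    simp only [A, of_apply]; split_ifs <;> positivity
  ext i j
  rw [indicatorGram_apply, sum_filter, mul_apply]
  refine sum_congr rfl fun s _ => ?_
  by_cases hi : i ∈ s <;> by_cases hj : j ∈ s <;> simp [A, hi, hj, Real.mul_self_sqrt (ha s)]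

theorem continuous_indicatorGram : Continuous (indicatorGram : (Finset ι → ℝ) → Matrix ι ι ℝ) :=
  continuous_pi fun _ => continuous_pi fun _ => continuous_finsetSum _ fun s _ => continuous_apply s

theorem isCompact_indicatorGram_image_Icc :
    IsCompact (indicatorGram '' Set.Icc (0 : Finset ι → ℝ) 1) :=
  isCompact_Icc.image continuous_indicatorGram

end IndicatorGram

section LowerPattern

open Finset

variable {Ω ι : Type*} [MeasurableSpace Ω] [Fintype ι]

def lowerPattern (Y : Ω → ι → ℝ) (u : ℝ) (ω : Ω) : Finset ι :=
  univ.filter fun k => Y ω k ≤ u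

variable {Y : Ω → ι → ℝ}

theorem measurable_lowerPattern (hY : ∀ k, Measurable fun ω => Y ω k) (u : ℝ) :
    Measurable (lowerPattern Y u) :=
  measurable_finset_iff.2 fun k => by
    simpa [lowerPattern] using (measurableSet_le (hY k) measurable_const).mem

theorem measure_lowerPattern_preimage_le (μ : Measure Ω) {u : ℝ} {s : Finset ι} {i : ι}
    (hi : i ∈ s) : μ (lowerPattern Y u ⁻¹' {s}) ≤ μ {ω | Y ω i ≤ u} :=
  measure_mono fun ω (hω : lowerPattern Y u ω = s) => by
    rw [← hω] at hi
    exact (mem_filter.1 hi).2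

-- The empty pattern enters no entry of `indicatorGram`, and its weight blows up as `u → 0`.
def tailWeights (μ : Measure Ω) (Y : Ω → ι → ℝ) (u : ℝ) (s : Finset ι) : ℝ :=
  if s.Nonempty then (μ (lowerPattern Y u ⁻¹' {s})).toReal / u else 0

theorem tailWeights_mem_Icc (μ : Measure Ω) {u : ℝ} (hu : 0 < u)
    (hmarg : ∀ k, μ {ω | Y ω k ≤ u} ≤ ENNReal.ofReal u) :
    tailWeights μ Y u ∈ Set.Icc 0 1 := by
  refine ⟨fun s => ?_, fun s => ?_⟩ <;> unfold tailWeights <;> split_ifs with hs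
  · positivity
  · rfl
  · obtain ⟨i, hi⟩ := hs
    rw [Pi.one_apply, div_le_one hu]
    exact ENNReal.toReal_le_of_le_ofReal hu.le
      ((measure_lowerPattern_preimage_le μ hi).trans (hmarg i))
  · exact zero_le_one

variable [DecidableEq ι]

theorem measure_le_and_le_eq_sum (μ : Measure Ω) (hY : ∀ k, Measurable fun ω => Y ω k)
    (u : ℝ) (i j : ι) :
    μ {ω | Y ω i ≤ u ∧ Y ω j ≤ u}
      = ∑ s ∈ univ.filter (fun s => i ∈ s ∧ j ∈ s), μ (lowerPattern Y u ⁻¹' {s}) := by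
  rw [sum_measure_preimage_singleton _ fun s _ =>
    measurable_lowerPattern hY u (measurableSet_singleton s)]
  congr 1
  ext ω
  simp [lowerPattern]

theorem indicatorGram_tailWeights (μ : Measure Ω) [IsFiniteMeasure μ]
    (hY : ∀ k, Measurable fun ω => Y ω k) (u : ℝ) (i j : ι) :
    indicatorGram (tailWeights μ Y u) i j = (μ {ω | Y ω i ≤ u ∧ Y ω j ≤ u}).toReal / u := by
  rw [measure_le_and_le_eq_sum μ hY, ENNReal.toReal_sum fun _ _ => measure_ne_top _ _,
    sum_div, indicatorGram_apply]
  refine sum_congr rfl fun s hs => ?_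
  rw [tailWeights, if_pos ⟨i, (mem_filter.1 hs).2.1⟩]

end LowerPattern

theorem stdUniform_Iic_le (u : ℝ) : stdUniform (Set.Iic u) ≤ ENNReal.ofReal u := by
  rw [stdUniform, Measure.restrict_apply measurableSet_Iic]
  calc volume (Set.Iic u ∩ Set.Icc 0 1) ≤ volume (Set.Icc 0 u) :=
        measure_mono fun x hx => ⟨hx.2.1, hx.1⟩
    _ = ENNReal.ofReal u := by rw [Real.volume_Icc, sub_zero]

theorem measure_setOf_le_le_of_map_eq_stdUniform {Ω : Type*} [MeasurableSpace Ω] {μ : Measure Ω}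
    {X : Ω → ℝ} (hX : Measurable X) (hunif : μ.map X = stdUniform) (u : ℝ) :
    μ {ω | X ω ≤ u} ≤ ENNReal.ofReal u := by
  calc μ {ω | X ω ≤ u} = μ.map X (Set.Iic u) := (Measure.map_apply hX measurableSet_Iic).symm
    _ ≤ ENNReal.ofReal u := hunif ▸ stdUniform_Iic_le u

open Topology in
theorem isCompletelyPositive_of_hasTailDepCoeff {Ω ι : Type} [MeasurableSpace Ω] [Fintype ι]
    {μ : Measure Ω} [IsFiniteMeasure μ] {Y : Ω → ι → ℝ} (hY : ∀ k, Measurable fun ω => Y ω k)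
    (hmarg : ∀ k u, μ {ω | Y ω k ≤ u} ≤ ENNReal.ofReal u) {Λ : Matrix ι ι ℝ}
    (hΛ : ∀ i j, HasTailDepCoeff μ (fun ω => Y ω i) (fun ω => Y ω j) (Λ i j)) :
    Λ.IsCompletelyPositive_s11 := by
  classical
  have hlim : Tendsto (fun u => indicatorGram (tailWeights μ Y u)) (𝓝[>] 0) (𝓝 Λ) :=
    tendsto_pi_nhds.2 fun i => tendsto_pi_nhds.2 fun j =>
      (hΛ i j).congr fun u => (indicatorGram_tailWeights μ hY u i j).symm
  have hmem : ∀ᶠ u in 𝓝[>] 0, indicatorGram (tailWeights μ Y u) ∈ indicatorGram '' Set.Icc 0 1 :=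
    eventually_mem_nhdsWithin.mono fun u hu =>
      Set.mem_image_of_mem _ (tailWeights_mem_Icc μ hu (hmarg · u))
  obtain ⟨a, ha, rfl⟩ := isCompact_indicatorGram_image_Icc.isClosed.mem_of_tendsto hlim hmem
  exact isCompletelyPositive_indicatorGram ha.1

/-- Corollary 3.8: every tail-dependence matrix is completely positive, hence positive
semi-definite. -/
theorem tail_dependence_completelyPositive {d : ℕ} (Λ : Matrix (Fin d) (Fin d) ℝ)
    (hΛ : IsTailDependenceMatrix Λ) :
    (∃ (m : ℕ) (A : Matrix (Fin d) (Fin m) ℝ), (∀ i j, 0 ≤ A i j) ∧ Λ = A * A.transpose) ∧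
    Λ.PosSemidef := by
  obtain ⟨Ω, _, μ, _, Y, hY, hunif, htail⟩ := hΛ
  have hcp := isCompletelyPositive_of_hasTailDepCoeff (fun k => hY.eval)
    (fun k => measure_setOf_le_le_of_map_eq_stdUniform hY.eval (hunif k)) htail
  exact ⟨hcp, hcp.posSemidef⟩
end
end

section
/- Let U = (U_1,...,U_m) be a random vector with uniform [0,1] margins whose pairwise tail-dependence coefficients exist and form the m×m matrix Λ, and let V = (V_1,...,V_d) be a random vector with uniform [0,1] margins whose pairwise tail-dependence coefficients exist and form the identity matrix I_d (i.e., λ_{ij} = 0 for i ≠ j). Let X be a random d×m matrix with entries in {0,1} such that each row of X has at most one entry equal to 1, with X, U, V independent. Set Z_i = 1 − Σ_{k=1}^m X_{ik} and Y_i = Σ_{k=1}^m X_{ik} U_k + Z_i V_i for i = 1,...,d. Then Y = (Y_1,...,Y_d) has uniform [0,1] margins, its pairwise tail-dependence coefficients exist, and for all i ≠ j they equal (E[X Λ Xᵀ])_{ij}; that is, the tail-dependence matrix of Y is obtained from E[X Λ Xᵀ] by replacing all diagonal entries with 1 (Theorem 4.2). -/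
/-!
Row `i` of `X` decides which source `Y i` copies: `U k` when `X i k = 1`, and `V i` when the
row vanishes. The selection is independent of `(U, V)`, so conditioning on the selection pattern
of rows `i` and `j` writes `P(Y i ≤ u, Y j ≤ u)` as a finite mixture, weighted by the pattern
probabilities, of the joint tails of the selected pair: `U k, U l` contributes `Λ k l`, an
independent uniform pair contributes `u²/u → 0`, and `V i, V j` contributes `0` since `i ≠ j`.
The weighted sum is `E[X Λ Xᵀ] i j`; conditioning on a single row shows that `Y i` is uniform.
-/

open MeasureTheory ProbabilityTheory Filter Set

noncomputable section

open Function Topology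

section IndependentSelector

variable {Ω α β γ ι : Type*}

theorem pairwise_disjoint_preimage_prodMk {κ : Type*} {S₁ : Ω → α} {S₂ : Ω → β}
    {A : ι → Set α} {B : κ → Set β} (h₁ : Pairwise (Disjoint on fun a => S₁ ⁻¹' A a))
    (h₂ : Pairwise (Disjoint on fun b => S₂ ⁻¹' B b)) :
    Pairwise (Disjoint on fun p : ι × κ => (fun ω => (S₁ ω, S₂ ω)) ⁻¹' (A p.1 ×ˢ B p.2)) := by
  intro p q hpq
  rcases not_and_or.mp fun h => hpq (Prod.ext h.1 h.2) with h | h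
  · exact (h₁ h).mono (fun _ hω => hω.1) (fun _ hω => hω.1)
  · exact (h₂ h).mono (fun _ hω => hω.2) (fun _ hω => hω.2)

variable [MeasurableSpace Ω] [MeasurableSpace α] [MeasurableSpace β] [MeasurableSpace γ]
  {μ : Measure Ω}

theorem ProbabilityTheory.IndepFun.indepFun_prodMk_of_prodMk [IsFiniteMeasure μ] {X : Ω → α}
    {U : Ω → β} {V : Ω → γ} (hX : Measurable X) (hU : Measurable U) (hV : Measurable V)
    (hXU : X ⟂ᵢ[μ] U) (hXUV : (fun ω => (X ω, U ω)) ⟂ᵢ[μ] V) :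
    X ⟂ᵢ[μ] fun ω => (U ω, V ω) := by
  have hUV : U ⟂ᵢ[μ] V := hXUV.comp measurable_snd measurable_id
  rw [indepFun_iff_map_prod_eq_prod_map_map hX.aemeasurable (hU.prodMk hV).aemeasurable,
    hUV.map_prod_eq_prod_map_map hU.aemeasurable hV.aemeasurable,
    ← Measure.prodAssoc_prod, ← hXU.map_prod_eq_prod_map_map hX.aemeasurable hU.aemeasurable,
    ← hXUV.map_prod_eq_prod_map_map (hX.prodMk hU).aemeasurable hV.aemeasurable,
    Measure.map_map MeasurableEquiv.prodAssoc.measurable ((hX.prodMk hU).prodMk hV)]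
  rfl

variable [Fintype ι] {S : Ω → α} {W : Ω → β} {A : ι → Set α} {f : ι → β → γ} {Y : Ω → γ}

theorem measure_preimage_eq_sum_of_indepFun (hS : Measurable S) (hW : Measurable W)
    (hSW : S ⟂ᵢ[μ] W) (hA : ∀ a, MeasurableSet (A a))
    (hdisj : Pairwise (Disjoint on fun a => S ⁻¹' A a)) (hcover : ∀ ω, ∃ a, S ω ∈ A a)
    (hf : ∀ a, Measurable (f a)) (hY : ∀ ω a, S ω ∈ A a → Y ω = f a (W ω))
    {s : Set γ} (hs : MeasurableSet s) :
    μ (Y ⁻¹' s) = ∑ a, μ (S ⁻¹' A a) * μ ((fun ω => f a (W ω)) ⁻¹' s) := by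
  have hdec : Y ⁻¹' s = ⋃ a, S ⁻¹' A a ∩ W ⁻¹' (f a ⁻¹' s) := by
    ext ω
    simp only [mem_preimage, mem_iUnion, mem_inter_iff]
    constructor
    · intro hω
      obtain ⟨a, ha⟩ := hcover ω
      exact ⟨a, ha, hY ω a ha ▸ hω⟩
    · rintro ⟨a, ha, hω⟩
      rwa [hY ω a ha]
  rw [hdec, measure_iUnion (fun a b hab => (hdisj hab).mono inter_subset_left inter_subset_left)
    (fun a => (hS (hA a)).inter (hW (hf a hs))), tsum_fintype]
  exact Finset.sum_congr rfl fun a _ => hSW.measure_inter_preimage_eq_mul _ _ (hA a) (hf a hs)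

theorem map_eq_of_indepFun [IsProbabilityMeasure μ] (hS : Measurable S) (hW : Measurable W)
    (hSW : S ⟂ᵢ[μ] W) (hA : ∀ a, MeasurableSet (A a))
    (hdisj : Pairwise (Disjoint on fun a => S ⁻¹' A a)) (hcover : ∀ ω, ∃ a, S ω ∈ A a)
    (hf : ∀ a, Measurable (f a)) (hY : ∀ ω a, S ω ∈ A a → Y ω = f a (W ω))
    (hYm : Measurable Y) {ν : Measure γ} (hν : ∀ a, μ.map (fun ω => f a (W ω)) = ν) :
    μ.map Y = ν := by
  have hsum : ∑ a, μ (S ⁻¹' A a) = 1 := by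
    simpa using (measure_preimage_eq_sum_of_indepFun hS hW hSW hA hdisj hcover hf hY
      MeasurableSet.univ).symm
  ext s hs
  rw [Measure.map_apply hYm hs,
    measure_preimage_eq_sum_of_indepFun hS hW hSW hA hdisj hcover hf hY hs]
  have hregime (a : ι) : μ ((fun ω => f a (W ω)) ⁻¹' s) = ν s := by
    rw [← hν a]
    exact (Measure.map_apply (f := fun ω => f a (W ω)) ((hf a).comp hW) hs).symm
  simp_rw [hregime, ← Finset.sum_mul, hsum, one_mul]

end IndependentSelector

section TailDependence

variable {Ω : Type} [MeasurableSpace Ω] {μ : Measure Ω} {Y₁ Y₂ : Ω → ℝ}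

theorem measure_le_of_map_eq_stdUniform_s16 (h : μ.map Y₁ = stdUniform) {t : ℝ} (ht : t ≤ 1) :
    μ {ω | Y₁ ω ≤ t} = ENNReal.ofReal t := by
  have hY : AEMeasurable Y₁ μ := .of_map_ne_zero <| by
    simp [h, stdUniform, Measure.restrict_eq_zero, Real.volume_Icc]
  have hIic : Iic t ∩ Icc (0 : ℝ) 1 = Icc 0 t := by
    ext x
    simp only [mem_inter_iff, mem_Iic, mem_Icc]
    grind
  change μ (Y₁ ⁻¹' Iic t) = _
  rw [← Measure.map_apply_of_aemeasurable hY measurableSet_Iic, h,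
    stdUniform, Measure.restrict_apply measurableSet_Iic, hIic, Real.volume_Icc, sub_zero]

theorem hasTailDepCoeff_self_of_map_eq_stdUniform (h : μ.map Y₁ = stdUniform) :
    HasTailDepCoeff μ Y₁ Y₁ 1 := by
  refine tendsto_const_nhds.congr' ?_
  filter_upwards [Ioo_mem_nhdsGT (zero_lt_one' ℝ)] with t ht
  simp only [and_self, measure_le_of_map_eq_stdUniform_s16 h ht.2.le,
    ENNReal.toReal_ofReal ht.1.le, div_self ht.1.ne']

theorem hasTailDepCoeff_zero_of_indepFun (h : Y₁ ⟂ᵢ[μ] Y₂) (h₁ : μ.map Y₁ = stdUniform)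
    (h₂ : μ.map Y₂ = stdUniform) : HasTailDepCoeff μ Y₁ Y₂ 0 := by
  have hid : Tendsto (fun t : ℝ => t) (𝓝[>] 0) (𝓝 0) := nhdsWithin_le_nhds
  refine hid.congr' ?_
  filter_upwards [Ioo_mem_nhdsGT (zero_lt_one' ℝ)] with t ht
  have hjoint : {ω | Y₁ ω ≤ t ∧ Y₂ ω ≤ t} = Y₁ ⁻¹' Iic t ∩ Y₂ ⁻¹' Iic t := rfl
  rw [hjoint, h.measure_inter_preimage_eq_mul _ _ measurableSet_Iic measurableSet_Iic]
  simp only [preimage, mem_Iic, measure_le_of_map_eq_stdUniform_s16 h₁ ht.2.le,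
    measure_le_of_map_eq_stdUniform_s16 h₂ ht.2.le, ENNReal.toReal_mul,
    ENNReal.toReal_ofReal ht.1.le, mul_self_div_self]

theorem hasTailDepCoeff_of_indepFun {α β ι : Type*} [MeasurableSpace α] [MeasurableSpace β]
    [Fintype ι] [IsFiniteMeasure μ] {S : Ω → α} {W : Ω → β} {A : ι → Set α}
    {f g : ι → β → ℝ} (hS : Measurable S) (hW : Measurable W) (hSW : S ⟂ᵢ[μ] W)
    (hA : ∀ a, MeasurableSet (A a)) (hdisj : Pairwise (Disjoint on fun a => S ⁻¹' A a))
    (hcover : ∀ ω, ∃ a, S ω ∈ A a) (hf : ∀ a, Measurable (f a)) (hg : ∀ a, Measurable (g a))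
    (hY₁ : ∀ ω a, S ω ∈ A a → Y₁ ω = f a (W ω)) (hY₂ : ∀ ω a, S ω ∈ A a → Y₂ ω = g a (W ω))
    {L : ι → ℝ} (hL : ∀ a, HasTailDepCoeff μ (fun ω => f a (W ω)) (fun ω => g a (W ω)) (L a)) :
    HasTailDepCoeff μ Y₁ Y₂ (∑ a, μ.real (S ⁻¹' A a) * L a) := by
  have hjoint (t : ℝ) : μ {ω | Y₁ ω ≤ t ∧ Y₂ ω ≤ t} =
      ∑ a, μ (S ⁻¹' A a) * μ {ω | f a (W ω) ≤ t ∧ g a (W ω) ≤ t} :=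
    measure_preimage_eq_sum_of_indepFun (f := fun a w => (f a w, g a w))
      (Y := fun ω => (Y₁ ω, Y₂ ω)) hS hW hSW hA hdisj hcover (fun a => (hf a).prodMk (hg a))
      (fun ω a ha => by rw [hY₁ ω a ha, hY₂ ω a ha]) (measurableSet_Iic.prod measurableSet_Iic)
  unfold HasTailDepCoeff
  simp_rw [hjoint, ENNReal.toReal_sum fun a _ => ENNReal.mul_ne_top (measure_ne_top _ _)
    (measure_ne_top _ _), ENNReal.toReal_mul, Finset.sum_div, mul_div_assoc]
  exact tendsto_finsetSum _ fun a _ => (hL a).const_mul _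

end TailDependence

section Selection

variable {κ : Type*}

def selects : Option κ → Set (κ → ℝ)
  | some k => {r | r k = 1}
  | none => {r | ∀ k, r k ≠ 1}

theorem measurableSet_selects [Countable κ] (a : Option κ) : MeasurableSet (selects a) := by
  have hone (k : κ) : MeasurableSet {r : κ → ℝ | r k = 1} :=
    measurableSet_eq_fun (measurable_pi_apply k) measurable_const
  cases a with
  | some k => exact hone k
  | none =>
    simp only [selects, ofPred_forall]
    exact MeasurableSet.iInter fun k => (hone k).compl

theorem exists_mem_selects (r : κ → ℝ) : ∃ a, r ∈ selects a := by
  by_cases h : ∃ k, r k = 1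
  · obtain ⟨k, hk⟩ := h
    exact ⟨some k, hk⟩
  · exact ⟨none, fun k hk => h ⟨k, hk⟩⟩

variable {r : κ → ℝ}

theorem eq_single_of_mem_selects [Fintype κ] [DecidableEq κ] (h01 : ∀ k, r k = 0 ∨ r k = 1)
    (hsum : ∑ k, r k ≤ 1) {k : κ} (hk : r ∈ selects (some k)) : r = Pi.single k 1 := by
  have hk : r k = 1 := hk
  have hnonneg (l : κ) : 0 ≤ r l := (h01 l).elim (·.ge) fun h => h ▸ zero_le_one
  funext l
  rcases eq_or_ne l k with rfl | hlk
  · simp [hk]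
  rw [Pi.single_eq_of_ne hlk]
  refine (h01 l).resolve_right fun hl => ?_
  have hpair : ∑ i ∈ {k, l}, r i ≤ ∑ i, r i :=
    Finset.sum_le_sum_of_subset_of_nonneg (Finset.subset_univ _) fun i _ _ => hnonneg i
  rw [Finset.sum_pair hlk.symm] at hpair
  linarith

theorem eq_zero_of_mem_selects_none (h01 : ∀ k, r k = 0 ∨ r k = 1) (h : r ∈ selects none) :
    r = 0 :=
  funext fun k => (h01 k).resolve_right (h k)

theorem eq_of_mem_selects [Fintype κ] (h01 : ∀ k, r k = 0 ∨ r k = 1) (hsum : ∑ k, r k ≤ 1)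
    {a b : Option κ} (ha : r ∈ selects a) (hb : r ∈ selects b) : a = b := by
  classical
  match a, b with
  | some k, some l =>
    have hl : r l = 1 := hb
    rw [eq_single_of_mem_selects h01 hsum ha, Pi.single_apply] at hl
    split_ifs at hl with hlk
    · exact congrArg some hlk.symm
    · norm_num at hl
  | some k, none => exact absurd ha (hb k)
  | none, some l => exact absurd hb (ha l)
  | none, none => rfl

theorem pairwise_disjoint_preimage_selects [Fintype κ] {Ω : Type*} {R : Ω → κ → ℝ}
    (h01 : ∀ ω k, R ω k = 0 ∨ R ω k = 1) (hsum : ∀ ω, ∑ k, R ω k ≤ 1) :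
    Pairwise (Disjoint on fun a => R ⁻¹' selects a) :=
  fun _ _ hab => disjoint_left.mpr fun ω ha hb => hab (eq_of_mem_selects (h01 ω) (hsum ω) ha hb)

/-- The value of `Y i` in the paper's model, with `r` the `i`-th row of `X`. -/
def mixture [Fintype κ] (r u : κ → ℝ) (v : ℝ) : ℝ := ∑ k, r k * u k + (1 - ∑ k, r k) * v

theorem mixture_eq_elim [Fintype κ] (h01 : ∀ k, r k = 0 ∨ r k = 1) (hsum : ∑ k, r k ≤ 1)
    {a : Option κ} (ha : r ∈ selects a) (u : κ → ℝ) (v : ℝ) : mixture r u v = a.elim v u := by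
  classical
  cases a with
  | some k => simp [mixture, eq_single_of_mem_selects h01 hsum ha, Pi.single_apply]
  | none => simp [mixture, eq_zero_of_mem_selects_none h01 ha]

theorem measurable_optionElim (a : Option κ) :
    Measurable fun w : (κ → ℝ) × ℝ => a.elim w.2 w.1 := by
  cases a <;> simp only [Option.elim_none, Option.elim_some] <;> fun_prop

def extendByZero (Λ : Matrix κ κ ℝ) : Option κ → Option κ → ℝ
  | some k, some l => Λ k l
  | _, _ => 0

theorem sum_mul_extendByZero [Fintype κ] (F : Option κ × Option κ → ℝ) (Λ : Matrix κ κ ℝ) :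
    ∑ p, F p * extendByZero Λ p.1 p.2 = ∑ k, ∑ l, F (some k, some l) * Λ k l := by
  simp [Fintype.sum_prod_type, Fintype.sum_option, extendByZero]

end Selection

theorem integral_sum_sum_mul_eq {Ω κ : Type*} [MeasurableSpace Ω] {μ : Measure Ω}
    [IsFiniteMeasure μ] [Fintype κ] {ξ η : Ω → κ → ℝ} (hξ : Measurable ξ) (hη : Measurable η)
    (hξ01 : ∀ ω k, ξ ω k = 0 ∨ ξ ω k = 1) (hη01 : ∀ ω k, η ω k = 0 ∨ η ω k = 1)
    (Λ : Matrix κ κ ℝ) :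
    ∫ ω, ∑ k, ∑ l, ξ ω k * Λ k l * η ω l ∂μ =
      ∑ k, ∑ l, μ.real {ω | ξ ω k = 1 ∧ η ω l = 1} * Λ k l := by
  have hmeas (k l : κ) : MeasurableSet {ω | ξ ω k = 1 ∧ η ω l = 1} :=
    (measurableSet_eq_fun ((measurable_pi_apply k).comp hξ) measurable_const).inter
      (measurableSet_eq_fun ((measurable_pi_apply l).comp hη) measurable_const)
  have hind (ω : Ω) (k l : κ) : ξ ω k * Λ k l * η ω l =
      {ω | ξ ω k = 1 ∧ η ω l = 1}.indicator (fun _ => Λ k l) ω := by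
    rcases hξ01 ω k with h | h <;> rcases hη01 ω l with h' | h' <;> simp [h, h', indicator]
  have hint (k l : κ) : Integrable (fun ω => ξ ω k * Λ k l * η ω l) μ := by
    simp_rw [hind]
    exact (integrable_const _).indicator (hmeas k l)
  rw [integral_finsetSum _ fun k _ => integrable_finsetSum _ fun l _ => hint k l]
  refine Finset.sum_congr rfl fun k _ => ?_
  rw [integral_finsetSum _ fun l _ => hint k l]
  refine Finset.sum_congr rfl fun l _ => ?_
  simp_rw [hind, integral_indicator_const _ (hmeas k l), smul_eq_mul]

section Mixture

variable {Ω : Type} [MeasurableSpace Ω] {μ : Measure Ω} {κ : Type*} {U : Ω → κ → ℝ}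
  {Λ : Matrix κ κ ℝ}

theorem hasTailDepCoeff_optionElim {v₁ v₂ : Ω → ℝ} (hUv : U ⟂ᵢ[μ] fun ω => (v₁ ω, v₂ ω))
    (hUmarg : ∀ k, μ.map (fun ω => U ω k) = stdUniform)
    (hUtail : ∀ k l, HasTailDepCoeff μ (fun ω => U ω k) (fun ω => U ω l) (Λ k l))
    (hv₁ : μ.map v₁ = stdUniform) (hv₂ : μ.map v₂ = stdUniform)
    (hvtail : HasTailDepCoeff μ v₁ v₂ 0) (a b : Option κ) :
    HasTailDepCoeff μ (fun ω => a.elim (v₁ ω) (U ω)) (fun ω => b.elim (v₂ ω) (U ω))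
      (extendByZero Λ a b) :=
  match a, b with
  | some k, some l => hUtail k l
  | some k, none =>
    hasTailDepCoeff_zero_of_indepFun (hUv.comp (measurable_pi_apply k) measurable_snd) (hUmarg k)
      hv₂
  | none, some l =>
    hasTailDepCoeff_zero_of_indepFun (hUv.symm.comp measurable_fst (measurable_pi_apply l)) hv₁
      (hUmarg l)
  | none, none => hvtail

variable [Fintype κ] {R R₁ R₂ : Ω → κ → ℝ}

theorem map_mixture_eq_stdUniform [IsProbabilityMeasure μ] {v : Ω → ℝ} (hR : Measurable R)
    (hU : Measurable U) (hv : Measurable v) (hind : R ⟂ᵢ[μ] fun ω => (U ω, v ω))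
    (h01 : ∀ ω k, R ω k = 0 ∨ R ω k = 1) (hsum : ∀ ω, ∑ k, R ω k ≤ 1)
    (hUmarg : ∀ k, μ.map (fun ω => U ω k) = stdUniform) (hvmarg : μ.map v = stdUniform) :
    μ.map (fun ω => mixture (R ω) (U ω) (v ω)) = stdUniform := by
  refine map_eq_of_indepFun hR (hU.prodMk hv) hind measurableSet_selects
    (pairwise_disjoint_preimage_selects h01 hsum) (fun ω => exists_mem_selects _)
    measurable_optionElim (fun ω a ha => mixture_eq_elim (h01 ω) (hsum ω) ha _ _)
    (by unfold mixture; fun_prop) ?_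
  rintro (_ | k)
  exacts [hvmarg, hUmarg k]

theorem hasTailDepCoeff_mixture [IsFiniteMeasure μ] {v₁ v₂ : Ω → ℝ} (hR₁ : Measurable R₁)
    (hR₂ : Measurable R₂) (hU : Measurable U) (hv₁ : Measurable v₁) (hv₂ : Measurable v₂)
    (hind : (fun ω => (R₁ ω, R₂ ω)) ⟂ᵢ[μ] fun ω => (U ω, v₁ ω, v₂ ω))
    (hUv : U ⟂ᵢ[μ] fun ω => (v₁ ω, v₂ ω))
    (h01₁ : ∀ ω k, R₁ ω k = 0 ∨ R₁ ω k = 1) (h01₂ : ∀ ω k, R₂ ω k = 0 ∨ R₂ ω k = 1)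
    (hsum₁ : ∀ ω, ∑ k, R₁ ω k ≤ 1) (hsum₂ : ∀ ω, ∑ k, R₂ ω k ≤ 1)
    (hUmarg : ∀ k, μ.map (fun ω => U ω k) = stdUniform)
    (hUtail : ∀ k l, HasTailDepCoeff μ (fun ω => U ω k) (fun ω => U ω l) (Λ k l))
    (hv₁marg : μ.map v₁ = stdUniform) (hv₂marg : μ.map v₂ = stdUniform)
    (hvtail : HasTailDepCoeff μ v₁ v₂ 0) :
    HasTailDepCoeff μ (fun ω => mixture (R₁ ω) (U ω) (v₁ ω))
      (fun ω => mixture (R₂ ω) (U ω) (v₂ ω)) (∫ ω, ∑ k, ∑ l, R₁ ω k * Λ k l * R₂ ω l ∂μ) := by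
  have hcoeff : ∫ ω, ∑ k, ∑ l, R₁ ω k * Λ k l * R₂ ω l ∂μ =
      ∑ p : Option κ × Option κ,
        μ.real ((fun ω => (R₁ ω, R₂ ω)) ⁻¹' (selects p.1 ×ˢ selects p.2)) *
          extendByZero Λ p.1 p.2 := by
    rw [sum_mul_extendByZero, integral_sum_sum_mul_eq hR₁ hR₂ h01₁ h01₂]
    rfl
  have hcover (ω : Ω) : ∃ p : Option κ × Option κ, (R₁ ω, R₂ ω) ∈ selects p.1 ×ˢ selects p.2 := by
    obtain ⟨a, ha⟩ := exists_mem_selects (R₁ ω)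
    obtain ⟨b, hb⟩ := exists_mem_selects (R₂ ω)
    exact ⟨(a, b), ha, hb⟩
  rw [hcoeff]
  exact hasTailDepCoeff_of_indepFun (ι := Option κ × Option κ) (hR₁.prodMk hR₂)
    (hU.prodMk (hv₁.prodMk hv₂)) hind
    (fun p => (measurableSet_selects p.1).prod (measurableSet_selects p.2))
    (pairwise_disjoint_preimage_prodMk (pairwise_disjoint_preimage_selects h01₁ hsum₁)
      (pairwise_disjoint_preimage_selects h01₂ hsum₂)) hcover
    (fun p => (measurable_optionElim p.1).comp (measurable_fst.prodMk measurable_snd.fst))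
    (fun p => (measurable_optionElim p.2).comp (measurable_fst.prodMk measurable_snd.snd))
    (fun ω p hp => mixture_eq_elim (h01₁ ω) (hsum₁ ω) hp.1 _ _)
    (fun ω p hp => mixture_eq_elim (h01₂ ω) (hsum₂ ω) hp.2 _ _)
    (fun p => hasTailDepCoeff_optionElim hUv hUmarg hUtail hv₁marg hv₂marg hvtail p.1 p.2)

end Mixture

/-- Theorem 4.2: if `U` has uniform margins and tail-dependence matrix `Λ`, `V` has uniform
margins and tail-dependence matrix `I_d`, `X` is a random `{0,1}`-matrix whose rows each have
at most one `1`, with `X, U, V` independent, and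
`Y i = ∑ k, X i k * U k + (1 - ∑ k, X i k) * V i`, then `Y` has uniform margins and its
tail-dependence matrix is `E[X Λ Xᵀ]` with the diagonal entries replaced by `1`. -/
theorem tail_dependence_of_mixture {d m : ℕ}
    (Ω : Type) [MeasurableSpace Ω] (μ : Measure Ω) [IsProbabilityMeasure μ]
    (U : Ω → Fin m → ℝ) (V : Ω → Fin d → ℝ) (X : Ω → Fin d → Fin m → ℝ)
    (hUmeas : Measurable U) (hVmeas : Measurable V) (hXmeas : Measurable X)
    (Λ : Matrix (Fin m) (Fin m) ℝ)
    (hUmarg : ∀ k, μ.map (fun ω => U ω k) = stdUniform)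
    (hUtail : ∀ k l, HasTailDepCoeff μ (fun ω => U ω k) (fun ω => U ω l) (Λ k l))
    (hVmarg : ∀ i, μ.map (fun ω => V ω i) = stdUniform)
    (hVtail : ∀ i j, HasTailDepCoeff μ (fun ω => V ω i) (fun ω => V ω j)
      ((1 : Matrix (Fin d) (Fin d) ℝ) i j))
    (hX01 : ∀ ω i k, X ω i k = 0 ∨ X ω i k = 1)
    (hXrow : ∀ ω i, (∑ k, X ω i k) ≤ 1)
    (hindep₁ : ProbabilityTheory.IndepFun X U μ)
    (hindep₂ : ProbabilityTheory.IndepFun (fun ω => (X ω, U ω)) V μ)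
    (Y : Ω → Fin d → ℝ)
    (hY : ∀ ω i, Y ω i = (∑ k, X ω i k * U ω k) + (1 - ∑ k, X ω i k) * V ω i) :
    (∀ i, μ.map (fun ω => Y ω i) = stdUniform) ∧
    (∀ i j, HasTailDepCoeff μ (fun ω => Y ω i) (fun ω => Y ω j)
      (if i = j then 1 else ∫ ω, ∑ k, ∑ l, X ω i k * Λ k l * X ω j l ∂μ)) := by
  have hXUV : X ⟂ᵢ[μ] fun ω => (U ω, V ω) :=
    hindep₁.indepFun_prodMk_of_prodMk hXmeas hUmeas hVmeas hindep₂
  have hUV : U ⟂ᵢ[μ] V := hindep₂.comp measurable_snd measurable_id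
  have hrow (i : Fin d) : Measurable fun ω => X ω i := (measurable_pi_apply i).comp hXmeas
  have hcol (i : Fin d) : Measurable fun ω => V ω i := (measurable_pi_apply i).comp hVmeas
  have hYmix (i : Fin d) : (fun ω => Y ω i) = fun ω => mixture (X ω i) (U ω) (V ω i) :=
    funext (hY · i)
  have hmarg (i : Fin d) : μ.map (fun ω => Y ω i) = stdUniform := by
    rw [hYmix]
    exact map_mixture_eq_stdUniform (hrow i) hUmeas (hcol i)
      (hXUV.comp (ψ := fun w : (Fin m → ℝ) × (Fin d → ℝ) => (w.1, w.2 i))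
        (measurable_pi_apply i) (by fun_prop)) (hX01 · i) (hXrow · i) hUmarg (hVmarg i)
  refine ⟨hmarg, fun i j => ?_⟩
  split_ifs with hij
  · subst hij
    exact hasTailDepCoeff_self_of_map_eq_stdUniform (hmarg i)
  rw [hYmix, hYmix]
  exact hasTailDepCoeff_mixture (hrow i) (hrow j) hUmeas (hcol i) (hcol j)
    (hXUV.comp (φ := fun M : Fin d → Fin m → ℝ => (M i, M j))
      (ψ := fun w : (Fin m → ℝ) × (Fin d → ℝ) => (w.1, w.2 i, w.2 j)) (by fun_prop) (by fun_prop))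
    (hUV.comp (ψ := fun v : Fin d → ℝ => (v i, v j)) measurable_id (by fun_prop))
    (hX01 · i) (hX01 · j) (hXrow · i) (hXrow · j) hUmarg hUtail (hVmarg i) (hVmarg j)
    (by simpa [hij] using hVtail i j)
end
end
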